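/- arXiv:2010.06862 — 3 statements merged into one kernel-verified Lean document; each statement's English description precedes it below -/
import Mathlib

section
/- Let γ, γ₀ > 0, V₀ ≥ 0, and 0 < Ω < γ. Then for all f ∈ Σ, the quadratic form B(f) := ‖∇f‖²_{L²} + 2∫_{ℝ²} V |f|² dx − 2Ω L(f), with V(x) = (γ²/2)|x|² + V₀ e^{−γ₀|x|²}, satisfies C₂(‖∇f‖²_{L²} + ‖x f‖²_{L²}) ≤ B(f) ≤ C₁(‖∇f‖²_{L²} + ‖x f‖²_{L²}) for positive constants C₁, C₂ depending only on γ, Ω, V₀, with C₂ = min((γ²−Ω²)/(γ²+Ω²), (γ²−Ω²)/2). -/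
open MeasureTheory

noncomputable section

/-- The plane `ℝ²`. -/
abbrev R2 : Type := EuclideanSpace ℝ (Fin 2)

/-- The `j`-th (classical) partial derivative of a complex-valued function on `ℝ²`. -/
noncomputable def pd (f : R2 → ℂ) (j : Fin 2) (x : R2) : ℂ :=
  fderiv ℝ f x (EuclideanSpace.single j 1)

/-- `|∇f(x)|²`, the squared length of the gradient. -/
noncomputable def gradsq (f : R2 → ℂ) (x : R2) : ℝ :=
  ‖pd f 0 x‖ ^ 2 + ‖pd f 1 x‖ ^ 2

/-- The angular momentum `L(f) = ∫ conj f · i (x₂ ∂₁ f − x₁ ∂₂ f)`. -/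
noncomputable def angMom (f : R2 → ℂ) : ℂ :=
  ∫ x : R2, (starRingEnd ℂ) (f x) *
    (Complex.I * ((x 1 : ℂ) * pd f 0 x - (x 0 : ℂ) * pd f 1 x))

/-- The trapping potential `V(x) = (γ²/2)|x|² + V₀ e^{−γ₀|x|²}`. -/
noncomputable def Vpot (γ γ₀ V₀ : ℝ) (x : R2) : ℝ :=
  γ ^ 2 / 2 * ‖x‖ ^ 2 + V₀ * Real.exp (-(γ₀ * ‖x‖ ^ 2))

/-- The quadratic form `B(f) = ‖∇f‖² + 2∫ V|f|² − 2Ω L(f)`. -/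
noncomputable def Bform (γ γ₀ V₀ Ω : ℝ) (f : R2 → ℂ) : ℝ :=
  (∫ x : R2, gradsq f x) + 2 * (∫ x : R2, Vpot γ γ₀ V₀ x * ‖f x‖ ^ 2)
    - 2 * Ω * (angMom f).re

/-! Write `G = ‖∇f‖²`, `T = ‖x f‖²` and `E = ∫ e^{−γ₀|x|²} |f|²`, so that
`B(f) = G + γ² T + 2 V₀ E − 2 Ω Re L(f)`. Pointwise AM–GM gives `2 |Re L(f)| ≤ ε G + ε⁻¹ T` for
every `ε > 0`; with `E ≥ 0` and `ε = 2Ω / (γ² + Ω²)` this is the lower bound. For the upper bound,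
`E ≤ ‖f‖²`, and an integration by parts in `x₂` gives the uncertainty-type inequality
`‖f‖² = −∫ x₂ ∂₂|f|² ≤ ‖x₂ f‖² + ‖∂₂ f‖² ≤ T + G`. -/

section Uncertainty

variable {E F : Type*} [NormedAddCommGroup E] [NormedSpace ℝ E] [FiniteDimensional ℝ E]
  [MeasurableSpace E] [BorelSpace E] {μ : Measure E} [μ.IsAddHaarMeasure]
  [NormedAddCommGroup F] [InnerProductSpace ℝ F]

lemma integral_norm_sq_le_integral_sq_mul_norm_sq_add_integral_norm_fderiv_sq
    {f : E → F} (hf : Differentiable ℝ f) (ℓ : E →L[ℝ] ℝ) {v : E} (hv : ℓ v = 1)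
    (hf2 : Integrable (fun x => ‖f x‖ ^ 2) μ)
    (hℓf : Integrable (fun x => ℓ x ^ 2 * ‖f x‖ ^ 2) μ)
    (hdf : Integrable (fun x => ‖fderiv ℝ f x v‖ ^ 2) μ) :
    ∫ x, ‖f x‖ ^ 2 ∂μ ≤ ∫ x, ℓ x ^ 2 * ‖f x‖ ^ 2 ∂μ + ∫ x, ‖fderiv ℝ f x v‖ ^ 2 ∂μ := by
  have hN : ∀ x, HasFDerivAt (fun y => ‖f y‖ ^ 2)
      (2 • (innerSL ℝ (f x)).comp (fderiv ℝ f x)) x := fun x => (hf x).hasFDerivAt.norm_sq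
  set D : E → ℝ := fun x => ℓ x * (2 * inner ℝ (f x) (fderiv ℝ f x v))
  have hD : ∀ x, |D x| ≤ ℓ x ^ 2 * ‖f x‖ ^ 2 + ‖fderiv ℝ f x v‖ ^ 2 := fun x => by
    have := abs_real_inner_le_norm (f x) (fderiv ℝ f x v)
    simp only [D, abs_mul, abs_two]
    nlinarith [sq_nonneg (|ℓ x| * ‖f x‖ - ‖fderiv ℝ f x v‖), abs_nonneg (ℓ x), sq_abs (ℓ x),
      norm_nonneg (f x), norm_nonneg (fderiv ℝ f x v)]
  have hDint : Integrable D μ := by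
    refine (hℓf.add hdf).mono' ?_ (Filter.Eventually.of_forall hD)
    have hDeq : D = fun x => ℓ x * fderiv ℝ (fun y => ‖f y‖ ^ 2) x v := by
      ext x; simp [D, (hN x).fderiv]
    rw [hDeq]
    exact (ℓ.measurable.mul (measurable_fderiv_apply_const ℝ _ v)).aestronglyMeasurable
  have hℓNint : Integrable (fun x => ℓ x * ‖f x‖ ^ 2) μ := by
    refine (hf2.add hℓf).mono' (ℓ.continuous.mul (hf.continuous.norm.pow 2)).aestronglyMeasurable
      (Filter.Eventually.of_forall fun x => ?_)
    rw [Pi.add_apply, norm_mul, Real.norm_eq_abs, norm_pow, norm_norm]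
    nlinarith [mul_nonneg (sq_nonneg (|ℓ x| - 1)) (sq_nonneg ‖f x‖), sq_abs (ℓ x),
      mul_nonneg (sq_nonneg (ℓ x)) (sq_nonneg ‖f x‖)]
  have hparts : ∫ x, D x ∂μ = -∫ x, ‖f x‖ ^ 2 ∂μ := by
    have := integral_bilinear_hasFDerivAt_right_eq_neg_left_of_integrable
      (B := ContinuousLinearMap.mul ℝ ℝ) (μ := μ) (v := v) (f := ℓ) (f' := fun _ => ℓ)
      (g := fun x => ‖f x‖ ^ 2) (g' := fun x => 2 • (innerSL ℝ (f x)).comp (fderiv ℝ f x))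
      (by simpa [hv] using hf2) (by simpa [D] using hDint) (by simpa using hℓNint)
      (fun x _ => ℓ.hasFDerivAt) (fun x _ => hN x)
    simpa [hv, D] using this
  calc ∫ x, ‖f x‖ ^ 2 ∂μ = -∫ x, D x ∂μ := by rw [hparts, neg_neg]
    _ ≤ ∫ x, |D x| ∂μ := (neg_le_abs _).trans (abs_integral_le_integral_abs)
    _ ≤ ∫ x, (ℓ x ^ 2 * ‖f x‖ ^ 2 + ‖fderiv ℝ f x v‖ ^ 2) ∂μ :=
      integral_mono hDint.abs (hℓf.add hdf) hD
    _ = _ := integral_add hℓf hdf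

end Uncertainty

lemma norm_sq_eq_sq_add_sq (x : R2) : ‖x‖ ^ 2 = x 0 ^ 2 + x 1 ^ 2 := by
  simp [EuclideanSpace.norm_sq_eq, Fin.sum_univ_two, sq_abs]

lemma sq_apply_le_norm_sq (x : R2) (i : Fin 2) : x i ^ 2 ≤ ‖x‖ ^ 2 := by
  rw [norm_sq_eq_sq_add_sq]
  fin_cases i <;> simp [sq_nonneg]

lemma integral_norm_sq_le_integral_moment_add_integral_gradsq (f : R2 → ℂ)
    (hf : Differentiable ℝ f) (hf2 : Integrable (fun x => ‖f x‖ ^ 2))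
    (hgrad : Integrable (gradsq f))
    (hxf : Integrable (fun x : R2 => ‖x‖ ^ 2 * ‖f x‖ ^ 2)) :
    ∫ x, ‖f x‖ ^ 2 ≤ (∫ x, ‖x‖ ^ 2 * ‖f x‖ ^ 2) + ∫ x, gradsq f x := by
  have hx1 : ∀ x : R2, x 1 ^ 2 * ‖f x‖ ^ 2 ≤ ‖x‖ ^ 2 * ‖f x‖ ^ 2 := fun x =>
    mul_le_mul_of_nonneg_right (sq_apply_le_norm_sq x 1) (by positivity)
  have hpd1 : ∀ x, ‖pd f 1 x‖ ^ 2 ≤ gradsq f x := fun x => by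
    unfold gradsq; nlinarith [sq_nonneg ‖pd f 0 x‖]
  have hℓf : Integrable (fun x : R2 => x 1 ^ 2 * ‖f x‖ ^ 2) := by
    refine hxf.mono' (by have := hf.continuous; fun_prop) (Filter.Eventually.of_forall fun x => ?_)
    rw [Real.norm_of_nonneg (by positivity)]
    exact hx1 x
  have hdf : Integrable (fun x => ‖pd f 1 x‖ ^ 2) := by
    refine hgrad.mono' ((measurable_fderiv_apply_const ℝ f _).norm.pow_const 2).aestronglyMeasurable
      (Filter.Eventually.of_forall fun x => ?_)
    rw [Real.norm_of_nonneg (by positivity)]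
    exact hpd1 x
  calc ∫ x, ‖f x‖ ^ 2
      ≤ (∫ x : R2, x 1 ^ 2 * ‖f x‖ ^ 2) + ∫ x, ‖pd f 1 x‖ ^ 2 :=
        integral_norm_sq_le_integral_sq_mul_norm_sq_add_integral_norm_fderiv_sq hf
          (EuclideanSpace.proj (1 : Fin 2)) (v := EuclideanSpace.single 1 1) (by simp) hf2 hℓf hdf
    _ ≤ (∫ x, ‖x‖ ^ 2 * ‖f x‖ ^ 2) + ∫ x, gradsq f x :=
        add_le_add (integral_mono hℓf hxf hx1) (integral_mono hdf hgrad hpd1)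

def angMomDensity (f : R2 → ℂ) (x : R2) : ℂ :=
  (starRingEnd ℂ) (f x) * (Complex.I * ((x 1 : ℂ) * pd f 0 x - (x 0 : ℂ) * pd f 1 x))

lemma two_mul_norm_angMomDensity_le (f : R2 → ℂ) (x : R2) {ε : ℝ} (hε : 0 < ε) :
    2 * ‖angMomDensity f x‖ ≤ ε * gradsq f x + ε⁻¹ * (‖x‖ ^ 2 * ‖f x‖ ^ 2) := by
  have hdens : ‖angMomDensity f x‖ ≤ ‖f x‖ * (|x 1| * ‖pd f 0 x‖ + |x 0| * ‖pd f 1 x‖) := by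
    rw [angMomDensity, norm_mul, norm_mul, RCLike.norm_conj, Complex.norm_I, one_mul]
    refine mul_le_mul_of_nonneg_left ((norm_sub_le _ _).trans_eq ?_) (norm_nonneg _)
    simp only [norm_mul, Complex.norm_real, Real.norm_eq_abs]
  calc 2 * ‖angMomDensity f x‖
      ≤ 2 * ‖pd f 0 x‖ * (|x 1| * ‖f x‖) + 2 * ‖pd f 1 x‖ * (|x 0| * ‖f x‖) := by
        linarith
    _ ≤ (ε * ‖pd f 0 x‖ ^ 2 + ε⁻¹ * (|x 1| * ‖f x‖) ^ 2)
          + (ε * ‖pd f 1 x‖ ^ 2 + ε⁻¹ * (|x 0| * ‖f x‖) ^ 2) :=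
        add_le_add (two_mul_le_add_mul_sq hε) (two_mul_le_add_mul_sq hε)
    _ = ε * gradsq f x + ε⁻¹ * (‖x‖ ^ 2 * ‖f x‖ ^ 2) := by
        rw [norm_sq_eq_sq_add_sq, gradsq, mul_pow, mul_pow, sq_abs, sq_abs]
        ring

lemma two_mul_abs_re_angMom_le (f : R2 → ℂ) (hgrad : Integrable (gradsq f))
    (hxf : Integrable (fun x : R2 => ‖x‖ ^ 2 * ‖f x‖ ^ 2)) {ε : ℝ} (hε : 0 < ε) :
    2 * |(angMom f).re| ≤
      ε * (∫ x, gradsq f x) + ε⁻¹ * ∫ x : R2, ‖x‖ ^ 2 * ‖f x‖ ^ 2 := by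
  have hbound := (hgrad.const_mul ε).add (hxf.const_mul ε⁻¹)
  calc 2 * |(angMom f).re| ≤ 2 * ∫ x, ‖angMomDensity f x‖ := by
        gcongr
        exact (Complex.abs_re_le_norm _).trans (norm_integral_le_integral_norm _)
    _ = ∫ x, 2 * ‖angMomDensity f x‖ := (integral_const_mul _ _).symm
    _ ≤ ∫ x, (ε * gradsq f x + ε⁻¹ * (‖x‖ ^ 2 * ‖f x‖ ^ 2)) :=
        integral_mono_of_nonneg (Filter.Eventually.of_forall fun x => by positivity) hbound
          (Filter.Eventually.of_forall fun x => two_mul_norm_angMomDensity_le f x hε)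
    _ = _ := by rw [integral_add (hgrad.const_mul ε) (hxf.const_mul ε⁻¹), integral_const_mul,
        integral_const_mul]

lemma exp_neg_mul_norm_sq_le_one {E : Type*} [SeminormedAddCommGroup E] {γ₀ : ℝ} (hγ₀ : 0 ≤ γ₀)
    (x : E) : Real.exp (-(γ₀ * ‖x‖ ^ 2)) ≤ 1 :=
  Real.exp_le_one_iff.2 (neg_nonpos.2 (by positivity))

section GaussianWeight

variable {E F : Type*} [NormedAddCommGroup E] [MeasurableSpace E] [OpensMeasurableSpace E]
  {μ : Measure E} [NormedAddCommGroup F] {γ₀ : ℝ} {f : E → F}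

lemma integrable_exp_neg_mul_norm_sq_mul (hγ₀ : 0 ≤ γ₀)
    (hf2 : Integrable (fun x => ‖f x‖ ^ 2) μ) :
    Integrable (fun x => Real.exp (-(γ₀ * ‖x‖ ^ 2)) * ‖f x‖ ^ 2) μ :=
  hf2.bdd_mul (c := 1) (by fun_prop) (Filter.Eventually.of_forall fun x => by
    rw [Real.norm_of_nonneg (Real.exp_pos _).le]
    exact exp_neg_mul_norm_sq_le_one hγ₀ x)

lemma integral_exp_neg_mul_norm_sq_mul_le (hγ₀ : 0 ≤ γ₀)
    (hf2 : Integrable (fun x => ‖f x‖ ^ 2) μ) :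
    ∫ x, Real.exp (-(γ₀ * ‖x‖ ^ 2)) * ‖f x‖ ^ 2 ∂μ ≤ ∫ x, ‖f x‖ ^ 2 ∂μ :=
  integral_mono (integrable_exp_neg_mul_norm_sq_mul hγ₀ hf2) hf2 fun x =>
    mul_le_of_le_one_left (by positivity) (exp_neg_mul_norm_sq_le_one hγ₀ x)

end GaussianWeight

lemma Bform_eq (γ γ₀ V₀ Ω : ℝ) {f : R2 → ℂ} (hγ₀ : 0 ≤ γ₀) (hf2 : Integrable (fun x => ‖f x‖ ^ 2))
    (hxf : Integrable (fun x : R2 => ‖x‖ ^ 2 * ‖f x‖ ^ 2)) :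
    Bform γ γ₀ V₀ Ω f = (∫ x, gradsq f x) + γ ^ 2 * (∫ x : R2, ‖x‖ ^ 2 * ‖f x‖ ^ 2)
      + 2 * V₀ * (∫ x : R2, Real.exp (-(γ₀ * ‖x‖ ^ 2)) * ‖f x‖ ^ 2)
      - 2 * Ω * (angMom f).re := by
  have hV : (fun x => Vpot γ γ₀ V₀ x * ‖f x‖ ^ 2) = fun x => γ ^ 2 / 2 * (‖x‖ ^ 2 * ‖f x‖ ^ 2)
      + V₀ * (Real.exp (-(γ₀ * ‖x‖ ^ 2)) * ‖f x‖ ^ 2) := by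
    ext x; rw [Vpot]; ring
  rw [Bform, hV, integral_add (hxf.const_mul _)
    ((integrable_exp_neg_mul_norm_sq_mul hγ₀ hf2).const_mul _), integral_const_mul,
    integral_const_mul]
  ring

lemma min_mul_add_le {a b G T : ℝ} (hG : 0 ≤ G) (hT : 0 ≤ T) :
    min a b * (G + T) ≤ a * G + b * T := by
  nlinarith [mul_le_mul_of_nonneg_right (min_le_left a b) hG,
    mul_le_mul_of_nonneg_right (min_le_right a b) hT]

theorem stmt2_general (γ γ₀ V₀ Ω : ℝ) (hγ₀ : 0 < γ₀) (hV₀ : 0 ≤ V₀)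
    (hΩ₁ : 0 < Ω) :
    ∃ C₁ : ℝ, 0 < C₁ ∧
      ∀ f : R2 → ℂ, Differentiable ℝ f → MemLp f 2 volume →
        Integrable (gradsq f) volume →
        Integrable (fun x : R2 => ‖x‖ ^ 2 * ‖f x‖ ^ 2) volume →
        min ((γ ^ 2 - Ω ^ 2) / (γ ^ 2 + Ω ^ 2)) ((γ ^ 2 - Ω ^ 2) / 2) *
            ((∫ x : R2, gradsq f x) + ∫ x : R2, ‖x‖ ^ 2 * ‖f x‖ ^ 2)
          ≤ Bform γ γ₀ V₀ Ω f ∧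
        Bform γ γ₀ V₀ Ω f ≤
          C₁ * ((∫ x : R2, gradsq f x) + ∫ x : R2, ‖x‖ ^ 2 * ‖f x‖ ^ 2) := by
  refine ⟨1 + γ ^ 2 + Ω + 2 * V₀, by positivity, fun f hf hf2 hgrad hxf => ?_⟩
  have hN : Integrable (fun x => ‖f x‖ ^ 2) := hf2.norm.integrable_sq
  rw [Bform_eq γ γ₀ V₀ Ω hγ₀.le hN hxf]
  set G := ∫ x, gradsq f x
  set T := ∫ x : R2, ‖x‖ ^ 2 * ‖f x‖ ^ 2
  set E := ∫ x : R2, Real.exp (-(γ₀ * ‖x‖ ^ 2)) * ‖f x‖ ^ 2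
  have hG : 0 ≤ G := integral_nonneg fun x => by unfold gradsq; positivity
  have hT : 0 ≤ T := integral_nonneg fun x => by positivity
  have hE : 0 ≤ E := integral_nonneg fun x => by positivity
  have hEle : E ≤ T + G := (integral_exp_neg_mul_norm_sq_mul_le hγ₀.le hN).trans
    (integral_norm_sq_le_integral_moment_add_integral_gradsq f hf hN hgrad hxf)
  constructor
  · set ε := 2 * Ω / (γ ^ 2 + Ω ^ 2)
    have hε : 0 < ε := by positivity
    have hL := two_mul_abs_re_angMom_le f hgrad hxf hε
    have h₁ : 1 - Ω * ε = (γ ^ 2 - Ω ^ 2) / (γ ^ 2 + Ω ^ 2) := by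
      simp only [ε]; field_simp; ring
    have h₂ : γ ^ 2 - Ω * ε⁻¹ = (γ ^ 2 - Ω ^ 2) / 2 := by
      simp only [ε]; field_simp; ring
    rw [← h₁, ← h₂]
    nlinarith [min_mul_add_le (a := 1 - Ω * ε) (b := γ ^ 2 - Ω * ε⁻¹) hG hT,
      le_abs_self (angMom f).re, mul_nonneg hV₀ hE]
  · have hL := two_mul_abs_re_angMom_le f hgrad hxf one_pos
    nlinarith [neg_abs_le (angMom f).re, mul_nonneg (sq_nonneg γ) hG,
      mul_le_mul_of_nonneg_left hEle hV₀]

/-- For `0 < Ω < γ`, `B(f) ≍ ‖∇f‖² + ‖xf‖²` on `Σ`, with explicit lower constant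
`C₂ = min((γ²−Ω²)/(γ²+Ω²), (γ²−Ω²)/2)`. -/
theorem stmt2 (γ γ₀ V₀ Ω : ℝ) (hγ : 0 < γ) (hγ₀ : 0 < γ₀) (hV₀ : 0 ≤ V₀)
    (hΩ₁ : 0 < Ω) (hΩ₂ : Ω < γ) :
    ∃ C₁ : ℝ, 0 < C₁ ∧
      ∀ f : R2 → ℂ, Differentiable ℝ f → MemLp f 2 volume →
        Integrable (gradsq f) volume →
        Integrable (fun x : R2 => ‖x‖ ^ 2 * ‖f x‖ ^ 2) volume →
        min ((γ ^ 2 - Ω ^ 2) / (γ ^ 2 + Ω ^ 2)) ((γ ^ 2 - Ω ^ 2) / 2) *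
            ((∫ x : R2, gradsq f x) + ∫ x : R2, ‖x‖ ^ 2 * ‖f x‖ ^ 2)
          ≤ Bform γ γ₀ V₀ Ω f ∧
        Bform γ γ₀ V₀ Ω f ≤
          C₁ * ((∫ x : R2, gradsq f x) + ∫ x : R2, ‖x‖ ^ 2 * ‖f x‖ ^ 2) :=
  stmt2_general γ γ₀ V₀ Ω hγ₀ hV₀ hΩ₁
end
end

section
/- There exists a constant C > 0 such that for all complex numbers u, v, | |u|⁴ ln(|u|²/√e) − |v|⁴ ln(|v|²/√e) | ≤ C |u − v| ( |u|² + |u|⁴ + |v|² + |v|⁴ ). -/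
/-!
For `r ≥ 0`, `r⁴ ln(r²/√e) = r⁴ (2 ln r − 1/2)`, a continuous function whose derivative
`8 r³ ln r` is bounded by `8 (r² + r⁴)`: on `(0, 1]` because `|r ln r| < 1`, and on `[1, ∞)`
because `ln r ≤ r`. The mean value theorem then bounds the difference at `‖u‖` and `‖v‖`,
and `|‖u‖ − ‖v‖| ≤ ‖u − v‖`.
-/

open Real

noncomputable def quarticLog (r : ℝ) : ℝ := r ^ 4 * log (r ^ 2 / √(exp 1))

lemma quarticLog_eq (r : ℝ) : quarticLog r = r ^ 4 * (2 * log r - 1 / 2) := by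
  rcases eq_or_ne r 0 with rfl | hr
  · simp [quarticLog]
  rw [quarticLog, log_div (by positivity) (by positivity), log_pow, log_sqrt (exp_pos 1).le,
    log_exp]
  norm_num

lemma continuous_quarticLog : Continuous quarticLog := by
  -- regrouped so that continuity at `0` comes from that of `r ↦ r log r`
  have h : quarticLog = fun r => 2 * r ^ 3 * (r * log r) - r ^ 4 / 2 := by
    funext r
    rw [quarticLog_eq]
    ring
  rw [h]
  fun_prop (disch := exact continuous_mul_log)

lemma hasDerivAt_quarticLog {r : ℝ} (hr : r ≠ 0) :
    HasDerivAt quarticLog (8 * r ^ 3 * log r) r := by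
  rw [show quarticLog = fun r => r ^ 4 * (2 * log r - 1 / 2) from funext quarticLog_eq]
  refine ((hasDerivAt_pow 4 r).mul
    (((hasDerivAt_log hr).const_mul 2).sub_const (1 / 2))).congr_deriv ?_
  field_simp
  ring

lemma abs_pow_three_mul_log_le {r : ℝ} (hr : 0 ≤ r) : |r ^ 3 * log r| ≤ r ^ 2 + r ^ 4 := by
  rcases hr.eq_or_lt with rfl | hr
  · simp
  rcases le_or_gt r 1 with h1 | h1
  · have hlog : |log r * r| < 1 := abs_log_mul_self_lt r hr h1
    calc |r ^ 3 * log r| = r ^ 2 * |log r * r| := by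
          rw [show r ^ 3 * log r = r ^ 2 * (log r * r) by ring, abs_mul, abs_of_pos (by positivity)]
      _ ≤ r ^ 2 * 1 := by gcongr
      _ ≤ r ^ 2 + r ^ 4 := by nlinarith [pow_nonneg hr.le 4]
  · have hlog : log r ≤ r := (log_le_sub_one_of_pos hr).trans (by linarith)
    rw [abs_of_nonneg (mul_nonneg (by positivity) (log_nonneg h1.le))]
    nlinarith [pow_pos hr 3, pow_pos hr 2]

lemma abs_quarticLog_sub_le_of_le {a b : ℝ} (hb : 0 ≤ b) (hba : b ≤ a) :
    |quarticLog a - quarticLog b| ≤ 8 * |a - b| * (a ^ 2 + a ^ 4 + b ^ 2 + b ^ 4) := by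
  rcases hba.eq_or_lt with rfl | hba
  · simp
  obtain ⟨c, ⟨hbc, hca⟩, hc⟩ := exists_hasDerivAt_eq_slope quarticLog
    (fun r => 8 * r ^ 3 * log r) hba continuous_quarticLog.continuousOn
    fun x hx => hasDerivAt_quarticLog (hb.trans_lt hx.1).ne'
  have hc0 : 0 ≤ c := hb.trans hbc.le
  have hsub : quarticLog a - quarticLog b = 8 * (c ^ 3 * log c) * (a - b) := by
    rw [eq_div_iff (sub_ne_zero.2 hba.ne')] at hc
    rw [← hc]
    ring
  have hmono : c ^ 2 + c ^ 4 ≤ a ^ 2 + a ^ 4 := by gcongr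
  calc |quarticLog a - quarticLog b| = 8 * |a - b| * |c ^ 3 * log c| := by
        rw [hsub, abs_mul, abs_mul, abs_of_pos (by norm_num : (0 : ℝ) < 8)]
        ring
    _ ≤ 8 * |a - b| * (a ^ 2 + a ^ 4) := by
        gcongr
        exact (abs_pow_three_mul_log_le hc0).trans hmono
    _ ≤ 8 * |a - b| * (a ^ 2 + a ^ 4 + b ^ 2 + b ^ 4) := by
        have : 0 ≤ b ^ 2 + b ^ 4 := by positivity
        gcongr 8 * |a - b| * ?_
        linarith

lemma abs_quarticLog_sub_le {a b : ℝ} (ha : 0 ≤ a) (hb : 0 ≤ b) :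
    |quarticLog a - quarticLog b| ≤ 8 * |a - b| * (a ^ 2 + a ^ 4 + b ^ 2 + b ^ 4) := by
  rcases le_total b a with hba | hab
  · exact abs_quarticLog_sub_le_of_le hb hba
  · rw [abs_sub_comm, abs_sub_comm a]
    convert abs_quarticLog_sub_le_of_le ha hab using 2
    ring

/-- There is `C > 0` such that for all complex `u, v`,
`| |u|⁴ ln(|u|²/√e) − |v|⁴ ln(|v|²/√e) | ≤ C |u−v| (|u|² + |u|⁴ + |v|² + |v|⁴)`. -/
theorem stmt5 :
    ∃ C : ℝ, 0 < C ∧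
      ∀ u v : ℂ,
        |‖u‖ ^ 4 * Real.log (‖u‖ ^ 2 / Real.sqrt (Real.exp 1))
            - ‖v‖ ^ 4 * Real.log (‖v‖ ^ 2 / Real.sqrt (Real.exp 1))| ≤
          C * ‖u - v‖ *
            (‖u‖ ^ 2 + ‖u‖ ^ 4 +
              ‖v‖ ^ 2 + ‖v‖ ^ 4) := by
  refine ⟨8, by norm_num, fun u v => ?_⟩
  calc _ = |quarticLog ‖u‖ - quarticLog ‖v‖| := rfl
    _ ≤ 8 * |‖u‖ - ‖v‖| * (‖u‖ ^ 2 + ‖u‖ ^ 4 + ‖v‖ ^ 2 + ‖v‖ ^ 4) :=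
        abs_quarticLog_sub_le (norm_nonneg u) (norm_nonneg v)
    _ ≤ 8 * ‖u - v‖ * (‖u‖ ^ 2 + ‖u‖ ^ 4 + ‖v‖ ^ 2 + ‖v‖ ^ 4) := by
        gcongr
        exact abs_norm_sub_norm_le u v
end

section
/- Let 0 < γ < 1/(2 e^{3/2}) and A(x) = γ(−x₂, x₁). Then there exist λ, b > 0 such that f = λ e^{−b|x|²} satisfies ‖f‖²_{L²} ≤ π (hence ≤ ‖Q‖²_{L²}) and E⁰_γ(f) := (1/2)‖(∇ − iA)f‖²_{L²} + (1/2)∫_{ℝ²} |f|⁴ ln(|f|²/√e) dx < 0. -/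
open MeasureTheory

noncomputable section

/-- `|(∇ − iA)f(x)|²` with magnetic potential `A(x) = γ(−x₂, x₁)`. -/
noncomputable def magsq (γ : ℝ) (f : R2 → ℂ) (x : R2) : ℝ :=
  ‖pd f 0 x - Complex.I * ((-(γ * x 1) : ℝ) : ℂ) * f x‖ ^ 2 +
    ‖pd f 1 x - Complex.I * ((γ * x 0 : ℝ) : ℂ) * f x‖ ^ 2

/-- The Gaussian trial function `x ↦ λ e^{−b|x|²}` (complex-valued). -/
noncomputable def gaussF (lam b : ℝ) : R2 → ℂ :=
  fun x => ((lam * Real.exp (-(b * ‖x‖ ^ 2)) : ℝ) : ℂ)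

/-! For a real trial function the cross term in `|(∇ − iA)f|²` vanishes, so
`|(∇ − iA)f|² = |∇f|² + |A|²|f|²`, and for `f = λe^{−b|x|²}` every term of the energy is a
Gaussian moment `∫_{ℝ²} (A + B|x|²) e^{−c|x|²} = π (A/c + B/c²)`, computed in polar coordinates.
With `λ² = 2γ` and `b = γ` the mass is exactly `π` and the energy is `(πγ/2)(ln(2γ) + 3/2)`,
which is negative precisely when `2γ < e^{−3/2}`. -/

open Real Set

lemma integral_Ioi_pow_mul_exp_neg_mul_sq {c : ℝ} (hc : 0 < c) (k : ℕ) :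
    ∫ y in Ioi (0 : ℝ), y ^ (2 * k + 1) * exp (-c * y ^ 2) = k.factorial / (2 * c ^ (k + 1)) := by
  have h := integral_rpow_mul_exp_neg_mul_rpow (p := 2) (q := 2 * k + 1) two_pos
    (by linarith [k.cast_nonneg (α := ℝ)]) hc
  rw [show ((2 * k + 1 : ℝ) + 1) / 2 = k + 1 by ring, Real.Gamma_nat_eq_factorial,
    show -((2 * k + 1 : ℝ) + 1) / 2 = -((k + 1 : ℕ) : ℝ) by push_cast; ring,
    Real.rpow_neg hc.le, Real.rpow_natCast] at h
  convert h using 1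
  · refine setIntegral_congr_fun measurableSet_Ioi fun y _ => ?_
    norm_cast
  · field_simp

lemma integrableOn_Ioi_pow_mul_exp_neg_mul_sq {c : ℝ} (hc : 0 < c) (k : ℕ) :
    IntegrableOn (fun y : ℝ => y ^ k * exp (-c * y ^ 2)) (Ioi 0) := by
  simpa [Real.rpow_natCast] using
    integrableOn_rpow_mul_exp_neg_mul_sq hc (s := k) (by linarith [k.cast_nonneg (α := ℝ)])

lemma integral_R2_fun_norm (g : ℝ → ℝ) :
    ∫ x : R2, g ‖x‖ = 2 * π * ∫ y in Ioi (0 : ℝ), y * g y := by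
  have hball : volume.real (Metric.ball (0 : R2) 1) = π := by
    simp [measureReal_def, EuclideanSpace.volume_ball, one_add_one_eq_two, Real.sq_sqrt pi_nonneg,
      pi_nonneg]
  rw [integral_fun_norm_addHaar volume g, finrank_euclideanSpace_fin, hball,
    ← integral_const_mul]
  simp only [smul_eq_mul, nsmul_eq_mul, ← integral_const_mul]
  congr 1; ext y; push_cast; ring

lemma integral_R2_add_mul_norm_sq_mul_exp_neg_mul_norm_sq {c : ℝ} (hc : 0 < c) (A B : ℝ) :
    ∫ x : R2, (A + B * ‖x‖ ^ 2) * exp (-c * ‖x‖ ^ 2) = π * (A / c + B / c ^ 2) := by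
  have hsplit : ∫ y in Ioi (0 : ℝ), y * ((A + B * y ^ 2) * exp (-c * y ^ 2))
      = A * (∫ y in Ioi (0 : ℝ), y ^ (2 * 0 + 1) * exp (-c * y ^ 2))
        + B * ∫ y in Ioi (0 : ℝ), y ^ (2 * 1 + 1) * exp (-c * y ^ 2) := by
    rw [← integral_const_mul, ← integral_const_mul, ← integral_add
      ((integrableOn_Ioi_pow_mul_exp_neg_mul_sq hc _).const_mul A)
      ((integrableOn_Ioi_pow_mul_exp_neg_mul_sq hc _).const_mul B)]
    congr 1; ext y; ring
  rw [integral_R2_fun_norm (fun y => (A + B * y ^ 2) * exp (-c * y ^ 2)), hsplit,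
    integral_Ioi_pow_mul_exp_neg_mul_sq hc, integral_Ioi_pow_mul_exp_neg_mul_sq hc]
  simp only [Nat.factorial, Nat.cast_one]
  field_simp
  ring

lemma hasFDerivAt_exp_neg_mul_norm_sq {E : Type*} [NormedAddCommGroup E] [InnerProductSpace ℝ E]
    (b : ℝ) (x : E) :
    HasFDerivAt (fun x : E => exp (-(b * ‖x‖ ^ 2)))
      ((-2 * b * exp (-(b * ‖x‖ ^ 2))) • innerSL ℝ x) x := by
  refine ((hasStrictFDerivAt_norm_sq x).hasFDerivAt.const_mul b).neg.exp.congr_fderiv ?_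
  ext v; simp [mul_comm, mul_left_comm, mul_assoc]

lemma pd_gaussF (lam b : ℝ) (j : Fin 2) (x : R2) :
    pd (gaussF lam b) j x = ((-2 * b * x j : ℝ) : ℂ) * gaussF lam b x := by
  have h : HasFDerivAt (gaussF lam b) (Complex.ofRealCLM.comp
      (lam • (-2 * b * exp (-(b * ‖x‖ ^ 2))) • innerSL ℝ x)) x :=
    Complex.ofRealCLM.hasFDerivAt.comp x ((hasFDerivAt_exp_neg_mul_norm_sq b x).const_mul lam)
  rw [pd, h.fderiv]
  simp [gaussF, EuclideanSpace.inner_single_right, mul_comm, mul_left_comm, mul_assoc]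

lemma sq_norm_gaussF (lam b : ℝ) (x : R2) :
    ‖gaussF lam b x‖ ^ 2 = lam ^ 2 * exp (-(2 * b) * ‖x‖ ^ 2) := by
  rw [gaussF, Complex.norm_real, Real.norm_eq_abs, sq_abs, mul_pow, ← Real.exp_nat_mul]
  push_cast; ring_nf

lemma magsq_gaussF (γ lam b : ℝ) (x : R2) :
    magsq γ (gaussF lam b) x = (4 * b ^ 2 + γ ^ 2) * ‖x‖ ^ 2 * ‖gaussF lam b x‖ ^ 2 := by
  have hcomp (p q : ℝ) : ‖(p : ℂ) * gaussF lam b x - Complex.I * (q : ℂ) * gaussF lam b x‖ ^ 2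
      = (p ^ 2 + q ^ 2) * ‖gaussF lam b x‖ ^ 2 := by
    rw [← sub_mul, norm_mul, mul_pow, show (p : ℂ) - Complex.I * q = p + ((-q : ℝ) : ℂ) * Complex.I
      by push_cast; ring, Complex.sq_norm, Complex.normSq_add_mul_I, neg_sq]
  rw [magsq, pd_gaussF, pd_gaussF, hcomp, hcomp, EuclideanSpace.real_norm_sq_eq, Fin.sum_univ_two]
  ring

lemma integral_sq_norm_gaussF (lam : ℝ) {b : ℝ} (hb : 0 < b) :
    ∫ x : R2, ‖gaussF lam b x‖ ^ 2 = π * lam ^ 2 / (2 * b) := by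
  have h := integral_R2_add_mul_norm_sq_mul_exp_neg_mul_norm_sq (by positivity : 0 < 2 * b)
    (lam ^ 2) 0
  simp only [zero_mul, add_zero, zero_div] at h
  simp_rw [sq_norm_gaussF, h]
  ring

lemma integral_magsq_gaussF (γ lam : ℝ) {b : ℝ} (hb : 0 < b) :
    ∫ x : R2, magsq γ (gaussF lam b) x = π * (4 * b ^ 2 + γ ^ 2) * lam ^ 2 / (4 * b ^ 2) := by
  have h := integral_R2_add_mul_norm_sq_mul_exp_neg_mul_norm_sq (by positivity : 0 < 2 * b)
    0 ((4 * b ^ 2 + γ ^ 2) * lam ^ 2)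
  have hpt (x : R2) : magsq γ (gaussF lam b) x
      = (0 + (4 * b ^ 2 + γ ^ 2) * lam ^ 2 * ‖x‖ ^ 2) * exp (-(2 * b) * ‖x‖ ^ 2) := by
    rw [magsq_gaussF, sq_norm_gaussF]
    ring
  simp_rw [hpt, h]
  field_simp
  ring

lemma integral_log_gaussF {lam : ℝ} (hlam : lam ≠ 0) {b : ℝ} (hb : 0 < b) :
    ∫ x : R2, ‖gaussF lam b x‖ ^ 4 * log (‖gaussF lam b x‖ ^ 2 / √(exp 1))
      = π * lam ^ 4 * (log (lam ^ 2) - 1) / (4 * b) := by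
  have h := integral_R2_add_mul_norm_sq_mul_exp_neg_mul_norm_sq (by positivity : 0 < 4 * b)
    (lam ^ 4 * (log (lam ^ 2) - 1 / 2)) (-(2 * b * lam ^ 4))
  have hpt (x : R2) : ‖gaussF lam b x‖ ^ 4 * log (‖gaussF lam b x‖ ^ 2 / √(exp 1))
      = (lam ^ 4 * (log (lam ^ 2) - 1 / 2) + -(2 * b * lam ^ 4) * ‖x‖ ^ 2)
        * exp (-(4 * b) * ‖x‖ ^ 2) := by
    rw [show ‖gaussF lam b x‖ ^ 4 = (‖gaussF lam b x‖ ^ 2) ^ 2 by ring, sq_norm_gaussF,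
      log_div (by positivity) (by positivity), log_mul (by positivity) (exp_ne_zero _), log_exp,
      log_sqrt (exp_pos 1).le, log_exp, mul_pow, ← exp_nat_mul]
    push_cast; ring_nf
  simp_rw [hpt, h]
  field_simp; ring

/-- For `0 < γ < 1/(2e^{3/2})` there are `λ, b > 0` such that `f = λe^{−b|x|²}`
has `‖f‖₂² ≤ π` (hence `≤ ‖Q‖₂²`) and negative magnetic energy `E⁰_γ(f) < 0`. -/
theorem stmt12 (γ : ℝ) (hγ₁ : 0 < γ) (hγ₂ : γ < 1 / (2 * Real.exp (3 / 2))) :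
    ∃ lam b : ℝ, 0 < lam ∧ 0 < b ∧
      (∫ x : R2, ‖gaussF lam b x‖ ^ 2) ≤ Real.pi ∧
      (1 / 2) * (∫ x : R2, magsq γ (gaussF lam b) x) +
        (1 / 2) * (∫ x : R2, ‖gaussF lam b x‖ ^ 4 *
          Real.log (‖gaussF lam b x‖ ^ 2 / Real.sqrt (Real.exp 1))) < 0 := by
  have hlam_sq : √(2 * γ) ^ 2 = 2 * γ := sq_sqrt (by positivity)
  have hlog : log (2 * γ) + 3 / 2 < 0 := by
    have h2γ : 2 * γ < exp (-(3 / 2)) := by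
      rw [exp_neg, ← one_div]
      rw [lt_div_iff₀ (by positivity)] at hγ₂ ⊢
      linarith
    linarith [(log_lt_iff_lt_exp (by positivity)).2 h2γ]
  refine ⟨√(2 * γ), γ, by positivity, hγ₁, ?_, ?_⟩
  · rw [integral_sq_norm_gaussF _ hγ₁, hlam_sq, mul_div_assoc, div_self (by positivity), mul_one]
  · rw [integral_magsq_gaussF _ _ hγ₁, integral_log_gaussF (by positivity) hγ₁,
      show √(2 * γ) ^ 4 = (√(2 * γ) ^ 2) ^ 2 by ring, hlam_sq]
    have henergy : 1 / 2 * (π * (4 * γ ^ 2 + γ ^ 2) * (2 * γ) / (4 * γ ^ 2))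
        + 1 / 2 * (π * (2 * γ) ^ 2 * (log (2 * γ) - 1) / (4 * γ))
        = π * γ / 2 * (log (2 * γ) + 3 / 2) := by
      field_simp
      ring
    rw [henergy]
    exact mul_neg_of_pos_of_neg (by positivity) hlog
end
end
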